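/- arXiv:2112.04797 — 4 statements merged into one kernel-verified Lean document; each statement's English description precedes it below -/
import Mathlib

section
/- There is no natural number n and no BST⁺ formula Ψ over the variable type Fin (n + 2) such that, for all sets a, b : ZFSet, a is a member of b if and only if there exists an assignment M : Fin (n + 2) → ZFSet with M 0 = a and M 1 = b that satisfies Ψ. (That is, the membership atom x ∈ y is not existentially expressible in BST⁺.) -/
/-- BST⁺ formulae over a variable type `V`: atoms `x = y \ z` combined with
conjunction, disjunction and negation. -/
inductive BSTFormula (V : Type*) : Type _
  | atom : V → V → V → BSTFormula V
  | and  : BSTFormula V → BSTFormula V → BSTFormula V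
  | or   : BSTFormula V → BSTFormula V → BSTFormula V
  | not  : BSTFormula V → BSTFormula V

/-- Satisfaction of a BST⁺ formula by a set assignment. -/
def BSTFormula.Satisfies {V : Type*} (M : V → ZFSet) : BSTFormula V → Prop
  | .atom x y z => M x = M y \ M z
  | .and f g    => f.Satisfies M ∧ g.Satisfies M
  | .or f g     => f.Satisfies M ∨ g.Satisfies M
  | .not f      => ¬ f.Satisfies M

/-- An assignment `M : V → ZFSet` is `b`-flat if every member of every value of `M`
has rank exactly `b`. -/
def IsFlat {V : Type*} (b : Ordinal) (M : V → ZFSet) : Prop :=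
  ∀ v : V, ∀ u : ZFSet, u ∈ M v → u.rank = b


/-!
Whether an assignment `M` satisfies a BST⁺ formula depends only on which Venn regions of the
sets `M v` are inhabited, i.e. on the family of membership patterns `{v | u ∈ M v}`. Take an
assignment witnessing `∅ ∈ {∅}` and realize its patterns again by an assignment `N` whose values
consist of nonzero von Neumann ordinals, one ordinal per pattern. Then `N` satisfies the formula
as well, so `N 0 ∈ N 1`; but then `N 0` is a nonzero ordinal, hence contains `∅`, which is not a
nonzero ordinal.
-/

open Ordinal

universe u

theorem Ordinal.exists_injective_pos (α : Type*) [Countable α] :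
    ∃ c : α → Ordinal.{u}, c.Injective ∧ ∀ a, 0 < c a := by
  obtain ⟨enc, henc⟩ := Countable.exists_injective_nat α
  exact ⟨fun a => enc a + 1, fun a b h => henc (by simpa using h), fun a => by positivity⟩

namespace BSTFormula

variable {V : Type*}

def patterns (M : V → ZFSet.{u}) : Set (Set V) :=
  Set.range fun u => {v | u ∈ M v}

theorem satisfies_atom_iff {M : V → ZFSet.{u}} {x y z : V} :
    (atom x y z).Satisfies M ↔ ∀ p ∈ patterns M, (x ∈ p ↔ y ∈ p ∧ z ∉ p) := by
  simp only [Satisfies, ZFSet.ext_iff, ZFSet.mem_sdiff, patterns, Set.forall_mem_range,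
    Set.mem_ofPred_eq]

theorem satisfies_congr {M N : V → ZFSet.{u}} (h : patterns M = patterns N) :
    ∀ Ψ : BSTFormula V, Ψ.Satisfies M ↔ Ψ.Satisfies N
  | atom x y z => by rw [satisfies_atom_iff, satisfies_atom_iff, h]
  | .and f g => and_congr (satisfies_congr h f) (satisfies_congr h g)
  | .or f g => or_congr (satisfies_congr h f) (satisfies_congr h g)
  | .not f => not_congr (satisfies_congr h f)

/-- The union of all `M v` lies in none of them. -/
theorem empty_mem_patterns [Small.{u} V] (M : V → ZFSet.{u}) : ∅ ∈ patterns M :=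
  ⟨ZFSet.iUnion M, Set.eq_empty_of_forall_notMem fun v hv =>
    ZFSet.mem_irrefl (ZFSet.iUnion M) (ZFSet.mem_iUnion.2 ⟨v, hv⟩)⟩

noncomputable def realize [Small.{u} (Set V)] (code : Set V → ZFSet.{u}) (P : Set (Set V))
    (v : V) : ZFSet.{u} :=
  ZFSet.range fun p : {p // p ∈ P ∧ v ∈ p} => code p

section realize

variable [Small.{u} (Set V)] {code : Set V → ZFSet.{u}} {P : Set (Set V)}

theorem mem_realize {v : V} {x : ZFSet.{u}} :
    x ∈ realize code P v ↔ ∃ p ∈ P, v ∈ p ∧ code p = x := by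
  simp [realize, ZFSet.mem_range, and_assoc]

theorem patterns_realize (hinj : code.Injective) (hsurj : ¬ code.Surjective) :
    patterns (realize code P) = insert ∅ P := by
  obtain ⟨x₀, hx₀⟩ := not_forall.1 hsurj
  ext p
  constructor
  · rintro ⟨x, rfl⟩
    by_cases hx : ∃ q ∈ P, code q = x
    · obtain ⟨q, hq, rfl⟩ := hx
      refine Or.inr (by convert hq using 1; ext v; simp [mem_realize, hinj.eq_iff, hq])
    · refine Or.inl (Set.eq_empty_of_forall_notMem fun v hv => ?_)
      obtain ⟨q, hq, -, rfl⟩ := mem_realize.1 hv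
      exact hx ⟨q, hq, rfl⟩
  · rintro (rfl | hp)
    · refine ⟨x₀, Set.eq_empty_of_forall_notMem fun v hv => ?_⟩
      obtain ⟨q, -, -, rfl⟩ := mem_realize.1 (show x₀ ∈ realize code P v from hv)
      exact hx₀ ⟨q, rfl⟩
    · exact ⟨code p, by ext v; simp [mem_realize, hinj.eq_iff, hp]⟩

/-- Every nonzero ordinal contains `∅`, which is not itself a nonzero ordinal. -/
theorem realize_notMem_realize {c : Set V → Ordinal.{u}} (hc : ∀ p, 0 < c p) (v w : V) :
    realize (toZFSet ∘ c) P v ∉ realize (toZFSet ∘ c) P w := by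
  intro hmem
  obtain ⟨p, -, -, hp⟩ := mem_realize.1 hmem
  have hempty : toZFSet 0 ∈ realize (toZFSet ∘ c) P v :=
    hp ▸ toZFSet_mem_toZFSet_iff.2 (hc p)
  obtain ⟨q, -, -, hq⟩ := mem_realize.1 hempty
  exact (hc q).ne' (toZFSet_injective hq)

end realize

theorem exists_patterns_eq_forall_notMem [Finite V] (M : V → ZFSet.{u}) :
    ∃ N : V → ZFSet.{u}, patterns M = patterns N ∧ ∀ v w, N v ∉ N w := by
  obtain ⟨c, hc_inj, hc_pos⟩ := Ordinal.exists_injective_pos.{u} (Set V)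
  refine ⟨realize (toZFSet ∘ c) (patterns M), ?_, realize_notMem_realize hc_pos⟩
  have hc_surj : ¬ (toZFSet ∘ c).Surjective := fun hsurj => by
    obtain ⟨p, hp⟩ := hsurj (toZFSet 0)
    exact (hc_pos p).ne' (toZFSet_injective hp)
  rw [patterns_realize (toZFSet_injective.comp hc_inj) hc_surj,
    Set.insert_eq_of_mem (empty_mem_patterns M)]

end BSTFormula

theorem mem_not_existentially_expressible :
    ¬ ∃ (n : ℕ) (Ψ : BSTFormula (Fin (n + 2))),
        ∀ a b : ZFSet, a ∈ b ↔
          ∃ M : Fin (n + 2) → ZFSet, M 0 = a ∧ M 1 = b ∧ Ψ.Satisfies M := by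
  rintro ⟨n, Ψ, hΨ⟩
  obtain ⟨M, -, -, hM⟩ := (hΨ ∅ {∅}).1 (ZFSet.mem_singleton.2 rfl)
  obtain ⟨N, hN, hN_notMem⟩ := BSTFormula.exists_patterns_eq_forall_notMem M
  exact hN_notMem 0 1 ((hΨ _ _).2 ⟨N, rfl, rfl, (BSTFormula.satisfies_congr hN Ψ).1 hM⟩)
end

section
/- Let V be a type of variables with a constraint system (P, N, S), let (x, y) ∈ S, and let M, T : V → ZFSet be such that M models the literals P and N, the pair (M, T) satisfies the Ξ-conditions for (P, N, S), and M y ∉ M v for every v : V. Then: M_{x,y} models the literals P and N, the pair (M_{x,y}, T) satisfies the Ξ-conditions for (P, N, S), M_{x,y} x = {M_{x,y} y}, M_{x,y} y = M y, and M_{x,y} x ≠ M x. -/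
/-!
Write `X = M x` and `Y = M y`. The Ξ-conditions make `X` nonempty and force every value `M v`
either to contain `X` or to be disjoint from it, and `Y` lies in no `M v`. On such sets `M_{x,y}`
is `A ↦ (A \ X) ∪ (if X ⊆ A then {Y} else ∅)`: it collapses the block `X` to the fresh point `Y`.
This map commutes with set difference and preserves and reflects inclusion, equality and overlap,
which is all that the literals and the Ξ-conditions speak about.
-/

/-- `M` models the positive literals `a = b \ c` in `P` and the negative literals
`a ≠ b \ c` in `N`. -/
def ModelsLits {V : Type*} (P N : Finset (V × V × V)) (M : V → ZFSet) : Prop :=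
  (∀ t ∈ P, M t.1 = M t.2.1 \ M t.2.2) ∧ (∀ t ∈ N, M t.1 ≠ M t.2.1 \ M t.2.2)

/-- `M` models the whole constraint system `(P, N, S)`. -/
def ModelsSystem {V : Type*} (P N : Finset (V × V × V)) (S : Finset (V × V))
    (M : V → ZFSet) : Prop :=
  ModelsLits P N M ∧ ∀ p ∈ S, M p.1 = {M p.2}

/-- The pair of assignments `(M, T)` satisfies the Ξ-conditions for the
constraint system `(P, N, S)`. -/
def XiConditions {V : Type*} (S : Finset (V × V)) (M T : V → ZFSet) : Prop :=
  (∀ p ∈ S, ¬ M p.1 ⊆ M p.2) ∧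
  (∀ p ∈ S, ∀ q ∈ S, (M p.2 = M q.2 ↔ M p.1 = M q.1)) ∧
  (∀ p ∈ S, ∀ v : V, M p.1 ∩ M v ≠ ∅ → M p.1 ⊆ M v) ∧
  (∀ p ∈ S, ∀ v : V, M p.1 ∩ M v ≠ ∅ → T p.2 ⊆ T v ∧ T p.2 ≠ T v) ∧
  (∀ u v : V, M u = M v → T u = T v)

open Classical in
/-- The modified assignment `M_{x,y}`. -/
noncomputable def modifyAssign {V : Type*} (M : V → ZFSet) (x y : V) : V → ZFSet :=
  fun v => if M x ∩ M v = ∅ then M v else (M v \ M x) ∪ {M y}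

namespace ZFSet

structure Collapsible (X Y A : ZFSet) : Prop where
  unsplit : X ∩ A ≠ ∅ → X ⊆ A
  not_mem : Y ∉ A

open Classical in
noncomputable def collapse (X Y A : ZFSet) : ZFSet :=
  if X ∩ A = ∅ then A else (A \ X) ∪ {Y}

variable {X Y A B z : ZFSet}

lemma inter_ne_empty_iff : X ∩ A ≠ ∅ ↔ ∃ z ∈ X, z ∈ A := by
  simp [eq_empty]

lemma subset_iff_inter_ne_empty (hX : X ≠ ∅) (hA : X ∩ A ≠ ∅ → X ⊆ A) :
    X ⊆ A ↔ X ∩ A ≠ ∅ := by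
  refine ⟨fun h => ?_, hA⟩
  obtain ⟨z, hz⟩ := (eq_empty_or_nonempty X).resolve_left hX
  exact inter_ne_empty_iff.2 ⟨z, hz, h hz⟩

lemma Collapsible.sdiff (hA : Collapsible X Y A) (hB : Collapsible X Y B) :
    Collapsible X Y (A \ B) where
  unsplit h := by
    obtain ⟨z, hzX, hzA, hzB⟩ : ∃ z ∈ X, z ∈ A ∧ z ∉ B := by
      simpa using inter_ne_empty_iff.1 h
    intro w hw
    have hXB : X ∩ B = ∅ := not_not.1 fun hXB => hzB (hB.unsplit hXB hzX)
    exact mem_sdiff.2 ⟨hA.unsplit (inter_ne_empty_iff.2 ⟨z, hzX, hzA⟩) hw,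
      fun hwB => inter_ne_empty_iff.2 ⟨w, hw, hwB⟩ hXB⟩
  not_mem h := hA.not_mem (mem_sdiff.1 h).1

lemma collapse_of_inter_eq_empty (h : X ∩ A = ∅) : collapse X Y A = A := if_pos h

lemma mem_collapse (hX : X ≠ ∅) (hA : X ∩ A ≠ ∅ → X ⊆ A) :
    z ∈ collapse X Y A ↔ z ∈ A ∧ z ∉ X ∨ z = Y ∧ X ⊆ A := by
  by_cases h : X ⊆ A
  · rw [collapse, if_neg ((subset_iff_inter_ne_empty hX hA).1 h)]
    simp [h]
  · have hXA : X ∩ A = ∅ := not_not.1 (mt (subset_iff_inter_ne_empty hX hA).2 h)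
    have hz : z ∈ A → z ∉ X := fun hzA hzX => inter_ne_empty_iff.2 ⟨z, hzX, hzA⟩ hXA
    rw [collapse, if_pos hXA]
    tauto

lemma collapse_self (hX : X ≠ ∅) : collapse X Y X = {Y} := by
  rw [collapse, if_neg (by rwa [inter_eq_left_of_subset subset_rfl])]
  ext z
  simp

lemma collapse_subset_collapse_iff (hX : X ≠ ∅) (hA : Collapsible X Y A)
    (hB : Collapsible X Y B) : collapse X Y A ⊆ collapse X Y B ↔ A ⊆ B := by
  simp only [subset_def, mem_collapse hX hA.unsplit, mem_collapse hX hB.unsplit]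
  refine ⟨fun h z hzA => ?_, fun h z => ?_⟩
  · by_cases hzX : z ∈ X
    · have hXA := hA.unsplit (inter_ne_empty_iff.2 ⟨z, hzX, hzA⟩)
      obtain ⟨hYB, -⟩ | ⟨-, hXB⟩ := h (Or.inr ⟨rfl, hXA⟩)
      · exact absurd hYB hB.not_mem
      · exact hXB hzX
    · obtain ⟨hzB, -⟩ | ⟨rfl, -⟩ := h (Or.inl ⟨hzA, hzX⟩)
      · exact hzB
      · exact absurd hzA hA.not_mem
  · rintro (⟨hzA, hzX⟩ | ⟨rfl, hXA⟩)
    · exact Or.inl ⟨h hzA, hzX⟩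
    · exact Or.inr ⟨rfl, fun w hw => h (hXA hw)⟩

lemma collapse_inj (hX : X ≠ ∅) (hA : Collapsible X Y A) (hB : Collapsible X Y B) :
    collapse X Y A = collapse X Y B ↔ A = B := by
  refine ⟨fun h => _root_.antisymm (r := (· ⊆ ·)) ?_ ?_, congrArg _⟩
  · exact (collapse_subset_collapse_iff hX hA hB).1 h.subset
  · exact (collapse_subset_collapse_iff hX hB hA).1 h.symm.subset

lemma collapse_sdiff (hX : X ≠ ∅) (hA : Collapsible X Y A) (hB : Collapsible X Y B) :
    collapse X Y (A \ B) = collapse X Y A \ collapse X Y B := by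
  ext z
  have hXAB : X ⊆ A \ B ↔ X ⊆ A ∧ ¬X ⊆ B := by
    rw [subset_iff_inter_ne_empty hX hB.unsplit, not_not, subset_def, subset_def]
    simp only [mem_sdiff, eq_empty, mem_inter]
    grind
  simp only [mem_sdiff, mem_collapse hX (hA.sdiff hB).unsplit, mem_collapse hX hA.unsplit,
    mem_collapse hX hB.unsplit]
  by_cases hzY : z = Y
  · subst hzY
    simp [hA.not_mem, hB.not_mem, hXAB]
  · simp only [hzY, false_and, or_false]
    tauto

lemma inter_ne_empty_of_collapse (hX : X ≠ ∅) (hA : Collapsible X Y A)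
    (hB : Collapsible X Y B) (h : collapse X Y A ∩ collapse X Y B ≠ ∅) : A ∩ B ≠ ∅ := by
  obtain ⟨z, hzA, hzB⟩ := inter_ne_empty_iff.1 h
  rw [mem_collapse hX hA.unsplit] at hzA
  rw [mem_collapse hX hB.unsplit] at hzB
  rcases hzA with ⟨hzA, -⟩ | ⟨rfl, hXA⟩ <;> rcases hzB with ⟨hzB, -⟩ | ⟨hzY, hXB⟩
  · exact inter_ne_empty_iff.2 ⟨z, hzA, hzB⟩
  · exact absurd (hzY ▸ hzA) hA.not_mem
  · exact absurd hzB hB.not_mem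
  · obtain ⟨w, hw⟩ := (eq_empty_or_nonempty X).resolve_left hX
    exact inter_ne_empty_iff.2 ⟨w, hXA hw, hXB hw⟩

end ZFSet

open ZFSet

section Assignments

variable {V : Type*} {X Y : ZFSet} {M : V → ZFSet}

lemma ModelsLits.comp_collapse (hX : X ≠ ∅) (hM : ∀ v, Collapsible X Y (M v))
    {P N : Finset (V × V × V)} (h : ModelsLits P N M) : ModelsLits P N (collapse X Y ∘ M) := by
  have hsdiff (b c : V) : collapse X Y (M b) \ collapse X Y (M c) = collapse X Y (M b \ M c) :=
    (collapse_sdiff hX (hM b) (hM c)).symm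
  refine ⟨fun t ht => ?_, fun t ht => ?_⟩
  · simp only [Function.comp_apply, hsdiff, h.1 t ht]
  · simp only [Function.comp_apply, hsdiff]
    rw [ne_eq, collapse_inj hX (hM _) ((hM _).sdiff (hM _))]
    exact h.2 t ht

lemma XiConditions.comp_collapse (hX : X ≠ ∅) (hM : ∀ v, Collapsible X Y (M v))
    {S : Finset (V × V)} {T : V → ZFSet} (h : XiConditions S M T) :
    XiConditions S (collapse X Y ∘ M) T := by
  obtain ⟨h₁, h₂, h₃, h₄, h₅⟩ := h
  simp only [XiConditions, Function.comp_apply, collapse_inj hX (hM _) (hM _),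
    collapse_subset_collapse_iff hX (hM _) (hM _)]
  refine ⟨h₁, h₂, fun p hp v hv => ?_, fun p hp v hv => ?_, h₅⟩
  · exact h₃ p hp v (inter_ne_empty_of_collapse hX (hM _) (hM _) hv)
  · exact h₄ p hp v (inter_ne_empty_of_collapse hX (hM _) (hM _) hv)

end Assignments

theorem modify_models {V : Type*} (P N : Finset (V × V × V)) (S : Finset (V × V))
    (x y : V) (hxy : (x, y) ∈ S) (M T : V → ZFSet)
    (hM : ModelsLits P N M) (hXi : XiConditions S M T)
    (hy : ∀ v : V, M y ∉ M v) :
    ModelsLits P N (modifyAssign M x y) ∧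
    XiConditions S (modifyAssign M x y) T ∧
    modifyAssign M x y x = {modifyAssign M x y y} ∧
    modifyAssign M x y y = M y ∧
    modifyAssign M x y x ≠ M x := by
  have hcomp : modifyAssign M x y = collapse (M x) (M y) ∘ M := rfl
  have hx : M x ≠ ∅ := fun h => hXi.1 _ hxy (h ▸ empty_subset _)
  have hcoll (v : V) : Collapsible (M x) (M y) (M v) := ⟨hXi.2.2.1 _ hxy v, hy v⟩
  have hMy : modifyAssign M x y y = M y :=
    collapse_of_inter_eq_empty (not_not.1 (mt (hXi.2.2.1 _ hxy y) (hXi.1 _ hxy)))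
  have hMx : modifyAssign M x y x = {M y} := collapse_self hx
  refine ⟨hcomp ▸ hM.comp_collapse hx hcoll, hcomp ▸ hXi.comp_collapse hx hcoll,
    by rw [hMx, hMy], hMy, ?_⟩
  rw [hMx]
  exact fun h => hy x (h ▸ mem_singleton.2 rfl)
end

section
/- Let V be a type of variables with a constraint system (P, N, S), let (x, y) ∈ S, and let M, T : V → ZFSet be such that M models the literals P and N, the pair (M, T) satisfies the Ξ-conditions for (P, N, S), and M y ∉ M v for every v : V. Let S' be the set of pairs (x', y') ∈ S such that M_{x,y} x' ≠ M x'. Then: (x, y) ∈ S'; for every (x', y') ∈ S', M_{x,y} x' = {M_{x,y} y'}; M_{x,y} y = M y; and for every (x', y') ∈ S', M_{x,y} x' = M_{x,y} x and M_{x,y} y' = M_{x,y} y. -/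
/-!
Only atoms `x' = {y'}` whose left-hand side meets `M x` are changed by `M_{x,y}`. By condition (iii)
applied in both directions such an atom has `M x' = M x`, and then by (ii) also `M y' = M y`. Since
`M x` and `M y` are disjoint by (i) and (iii), `M_{x,y}` leaves `y` alone and sends `x` (hence every
changed `x'`) to `{M y}`, which differs from `M x` because `M y ∉ M x`.
-/

namespace ZFSet

theorem inter_comm (s t : ZFSet) : s ∩ t = t ∩ s :=
  ext fun z => by simp only [mem_inter, and_comm]

theorem inter_self (s : ZFSet) : s ∩ s = s :=
  ext fun z => by simp only [mem_inter, and_self]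

theorem sdiff_self_union (s t : ZFSet) : s \ s ∪ t = t :=
  ext fun z => by simp only [mem_union, mem_sdiff, and_not_self, false_or]

end ZFSet

namespace XiConditions

variable {V : Type*} {S : Finset (V × V)} {M T : V → ZFSet} {p q : V × V}

theorem fst_ne_empty (hXi : XiConditions S M T) (hp : p ∈ S) : M p.1 ≠ ∅ := fun h =>
  hXi.1 p hp (h ▸ ZFSet.empty_subset _)

theorem fst_inter_snd_eq_empty (hXi : XiConditions S M T) (hp : p ∈ S) :
    M p.1 ∩ M p.2 = ∅ := by
  by_contra h
  exact hXi.1 p hp (hXi.2.2.1 p hp p.2 h)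

theorem fst_eq_of_inter_ne_empty (hXi : XiConditions S M T) (hp : p ∈ S) (hq : q ∈ S)
    (h : M p.1 ∩ M q.1 ≠ ∅) : M p.1 = M q.1 :=
  le_antisymm (hXi.2.2.1 p hp q.1 h)
    (hXi.2.2.1 q hq p.1 (by rwa [ZFSet.inter_comm]))

theorem snd_eq_of_inter_ne_empty (hXi : XiConditions S M T) (hp : p ∈ S) (hq : q ∈ S)
    (h : M p.1 ∩ M q.1 ≠ ∅) : M p.2 = M q.2 :=
  (hXi.2.1 p hp q hq).2 (hXi.fst_eq_of_inter_ne_empty hp hq h)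

end XiConditions

section modifyAssign

variable {V : Type*} {M : V → ZFSet} {x y u v : V}

theorem modifyAssign_of_inter_eq_empty (h : M x ∩ M v = ∅) : modifyAssign M x y v = M v :=
  if_pos h

theorem modifyAssign_of_inter_ne_empty (h : M x ∩ M v ≠ ∅) :
    modifyAssign M x y v = (M v \ M x) ∪ {M y} :=
  if_neg h

theorem modifyAssign_congr (h : M u = M v) : modifyAssign M x y u = modifyAssign M x y v := by
  unfold modifyAssign
  rw [h]

theorem modifyAssign_self (hx : M x ≠ ∅) : modifyAssign M x y x = {M y} := by
  rw [modifyAssign_of_inter_ne_empty (by rwa [ZFSet.inter_self]), ZFSet.sdiff_self_union]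

theorem inter_ne_empty_of_modifyAssign_ne (h : modifyAssign M x y v ≠ M v) :
    M x ∩ M v ≠ ∅ :=
  fun hv => h (modifyAssign_of_inter_eq_empty hv)

end modifyAssign

theorem modify_changed_atoms_general {V : Type*} (S : Finset (V × V))
    (x y : V) (hxy : (x, y) ∈ S) (M T : V → ZFSet)
    (hXi : XiConditions S M T)
    (hy : ∀ v : V, M y ∉ M v)
    (S' : Set (V × V)) (hS' : S' = {p : V × V | p ∈ S ∧ modifyAssign M x y p.1 ≠ M p.1}) :
    (x, y) ∈ S' ∧
    (∀ p ∈ S', modifyAssign M x y p.1 = {modifyAssign M x y p.2}) ∧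
    modifyAssign M x y y = M y ∧
    (∀ p ∈ S', modifyAssign M x y p.1 = modifyAssign M x y x ∧
      modifyAssign M x y p.2 = modifyAssign M x y y) := by
  subst hS'
  have mod_x : modifyAssign M x y x = {M y} := modifyAssign_self (hXi.fst_ne_empty hxy)
  have mod_y : modifyAssign M x y y = M y :=
    modifyAssign_of_inter_eq_empty (hXi.fst_inter_snd_eq_empty hxy)
  have changed : ∀ p ∈ S, modifyAssign M x y p.1 ≠ M p.1 →
      modifyAssign M x y p.1 = modifyAssign M x y x ∧
        modifyAssign M x y p.2 = modifyAssign M x y y := fun p hp hne =>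
    have hmeet := inter_ne_empty_of_modifyAssign_ne hne
    ⟨modifyAssign_congr (hXi.fst_eq_of_inter_ne_empty hxy hp hmeet).symm,
      modifyAssign_congr (hXi.snd_eq_of_inter_ne_empty hxy hp hmeet).symm⟩
  refine ⟨⟨hxy, ?_⟩, fun p ⟨hp, hne⟩ => ?_, mod_y, fun p ⟨hp, hne⟩ => changed p hp hne⟩
  · rw [mod_x]
    intro h
    exact hy x (h ▸ ZFSet.mem_singleton.mpr rfl)
  · obtain ⟨h₁, h₂⟩ := changed p hp hne
    rw [h₁, h₂, mod_x, mod_y]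

theorem modify_changed_atoms {V : Type*} (P N : Finset (V × V × V)) (S : Finset (V × V))
    (x y : V) (hxy : (x, y) ∈ S) (M T : V → ZFSet)
    (hM : ModelsLits P N M) (hXi : XiConditions S M T)
    (hy : ∀ v : V, M y ∉ M v)
    (S' : Set (V × V)) (hS' : S' = {p : V × V | p ∈ S ∧ modifyAssign M x y p.1 ≠ M p.1}) :
    (x, y) ∈ S' ∧
    (∀ p ∈ S', modifyAssign M x y p.1 = {modifyAssign M x y p.2}) ∧
    modifyAssign M x y y = M y ∧
    (∀ p ∈ S', modifyAssign M x y p.1 = modifyAssign M x y x ∧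
      modifyAssign M x y p.2 = modifyAssign M x y y) :=
  modify_changed_atoms_general S x y hxy M T hXi hy S' hS'
end

section
/- Let V be a finite type of variables and Ψ a BST⁺ formula over V that has a model. Then for all x, y : V there exists a model M of Ψ such that M x ∉ M y. -/
/-!
Whether an assignment satisfies a BST⁺ formula depends only on its occupied Venn regions: the
nonempty sets `{v | u ∈ M v}` for sets `u`. Given a model `M`, put one fresh element `c S` in
each occupied region `S` of `M`; this is again a model, in any universe. Taking the `c S` to be
the nonzero finite von Neumann ordinals, every value of the new model omits `∅` while every `c S`
contains it, so no value is a member of another.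
-/

universe u w

section

variable {V : Type*}

def vennRegions (M : V → ZFSet.{u}) : Set (Set V) :=
  {S | S.Nonempty ∧ ∃ a : ZFSet.{u}, ∀ v, a ∈ M v ↔ v ∈ S}

theorem eq_sdiff_iff_forall_vennRegions (M : V → ZFSet.{u}) (x y z : V) :
    M x = M y \ M z ↔ ∀ S ∈ vennRegions M, (x ∈ S ↔ y ∈ S ∧ z ∉ S) := by
  constructor
  · rintro h S ⟨-, a, ha⟩
    rw [← ha x, ← ha y, ← ha z, h, ZFSet.mem_sdiff]
  · intro h
    ext a
    rw [ZFSet.mem_sdiff]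
    by_cases hocc : ∃ v, a ∈ M v
    · exact h {v | a ∈ M v} ⟨hocc, a, fun _ => Iff.rfl⟩
    · push Not at hocc
      simp [hocc x, hocc y]

theorem BSTFormula.satisfies_iff_of_vennRegions_eq {M : V → ZFSet.{u}} {N : V → ZFSet.{w}}
    (h : vennRegions M = vennRegions N) (Φ : BSTFormula V) : Φ.Satisfies M ↔ Φ.Satisfies N := by
  induction Φ with
  | atom x y z => simp only [Satisfies, eq_sdiff_iff_forall_vennRegions, h]
  | and f g ihf ihg => simp only [Satisfies, ihf, ihg]
  | or f g ihf ihg => simp only [Satisfies, ihf, ihg]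
  | not f ihf => simp only [Satisfies, ihf]

theorem exists_injective_forall_empty_mem (α : Type*) [Countable α] :
    ∃ c : α → ZFSet.{w}, Function.Injective c ∧ ∀ a, ∅ ∈ c a := by
  obtain ⟨f, hf⟩ := exists_injective_nat α
  refine ⟨fun a => Ordinal.toZFSet ((f a + 1 : ℕ) : Ordinal), ?_, fun a => ?_⟩
  · exact Ordinal.toZFSet_injective.comp <| Nat.cast_injective.comp <| Nat.succ_injective.comp hf
  · rw [← Ordinal.toZFSet_zero, Ordinal.toZFSet_mem_toZFSet_iff]
    exact_mod_cast Nat.succ_pos _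

section Realize

variable [Finite V] (c : Set V → ZFSet.{w}) (T : Set (Set V))

noncomputable def realizeRegions (v : V) : ZFSet.{w} :=
  ZFSet.range fun S : {S // S ∈ T ∧ v ∈ S} => c S

variable {c T}

theorem mem_realizeRegions {a : ZFSet.{w}} {v : V} :
    a ∈ realizeRegions c T v ↔ ∃ S ∈ T, v ∈ S ∧ c S = a := by
  simp [realizeRegions, ZFSet.mem_range, and_assoc]

theorem vennRegions_realizeRegions (hc : Function.Injective c) (hT : ∀ S ∈ T, S.Nonempty) :
    vennRegions (realizeRegions c T) = T := by
  ext S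
  constructor
  · rintro ⟨⟨v, hv⟩, a, ha⟩
    obtain ⟨S', hS'T, -, rfl⟩ := mem_realizeRegions.1 ((ha v).2 hv)
    convert hS'T using 1
    ext v'
    rw [← ha v', mem_realizeRegions]
    exact ⟨fun ⟨_, _, hv', hcS⟩ => hc hcS ▸ hv', fun hv' => ⟨S', hS'T, hv', rfl⟩⟩
  · intro hS
    refine ⟨hT S hS, c S, fun v => ?_⟩
    rw [mem_realizeRegions]
    exact ⟨fun ⟨_, _, hv, hcS⟩ => hc hcS ▸ hv, fun hv => ⟨S, hS, hv, rfl⟩⟩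

theorem realizeRegions_notMem (hc : ∀ S, ∅ ∈ c S) (x y : V) :
    realizeRegions c T x ∉ realizeRegions c T y := by
  intro hxy
  obtain ⟨S, -, -, hS⟩ := mem_realizeRegions.1 hxy
  obtain ⟨S', -, -, hS'⟩ := mem_realizeRegions.1 (hS ▸ hc S)
  exact ZFSet.notMem_empty _ (hS' ▸ hc S')

end Realize

end

theorem exists_model_not_mem {V : Type*} [Fintype V] (Ψ : BSTFormula V)
    (hsat : ∃ M : V → ZFSet, Ψ.Satisfies M) :
    ∀ x y : V, ∃ M : V → ZFSet, Ψ.Satisfies M ∧ M x ∉ M y := by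
  intro x y
  obtain ⟨M, hM⟩ := hsat
  obtain ⟨c, hc_inj, hc_empty⟩ := exists_injective_forall_empty_mem (Set V)
  refine ⟨realizeRegions c (vennRegions M), ?_, realizeRegions_notMem hc_empty x y⟩
  have hregions := vennRegions_realizeRegions (T := vennRegions M) hc_inj fun _ hS => hS.1
  exact (Ψ.satisfies_iff_of_vennRegions_eq hregions.symm).1 hM
end
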